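/- arXiv:1905.07021 — 4 statements merged into one kernel-verified Lean document; each statement's English description precedes it below -/
import Mathlib

section
/- Let X be an irreducible variety over an algebraically closed field k of characteristic 0 and f: X ⇢ X a dominant rational self-map. If for some m ≥ 1 there exists a nonconstant rational function H on X with H ∘ f^m = H, then there exists a nonconstant rational function G on X with G ∘ f = G. -/
/-!
STATEMENT 0.
Let `X` be an irreducible variety over an algebraically closed field `k` of characteristic 0
and `f : X ⇢ X` a dominant rational self-map.  We model the variety by its function field
`K = k(X)`, a finitely generated field extension of `k`, and the dominant rational self-map
by its pullback `φ = f^* : K →ₐ[k] K` (a `k`-algebra endomorphism of `K`; dominance is what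
makes the pullback well defined, and injectivity is automatic).  A rational function `H` is
nonconstant iff `H` is not in the image of `k`, and `H ∘ f = H` iff `φ H = H`.

Claim: if for some `m ≥ 1` there is a nonconstant `H` with `H ∘ f^m = H`, then there is a
nonconstant `G` with `G ∘ f = G`.
-/
theorem stmt0
    (k : Type*) [Field k] [IsAlgClosed k] [CharZero k]
    (K : Type*) [Field K] [Algebra k K]
    (hfg : (⊤ : IntermediateField k K).FG)            -- K = k(X) is finitely generated over k
    (φ : K →ₐ[k] K)                                    -- pullback f^* of the dominant self-map
    (m : ℕ) (hm : 1 ≤ m)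
    (H : K) (hH : H ∉ Set.range (algebraMap k K))      -- H is nonconstant
    (hHinv : (⇑φ)^[m] H = H) :                         -- H ∘ f^m = H
    ∃ G : K, G ∉ Set.range (algebraMap k K) ∧ φ G = G := by
  by_contra hcon
  push_neg at hcon
  -- the factors and the invariant polynomial
  set F : ℕ → Polynomial K := fun i => Polynomial.X - Polynomial.C ((⇑φ)^[i] H) with hF
  set p : Polynomial K := ∏ i ∈ Finset.range m, F i with hp
  have hmonic : p.Monic :=
    Polynomial.monic_prod_of_monic _ _ (fun i _ => Polynomial.monic_X_sub_C _)
  have hroot : Polynomial.eval H p = 0 := by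
    rw [hp, Polynomial.eval_prod]
    apply Finset.prod_eq_zero (Finset.mem_range.2 hm)
    simp [hF]
  -- p is φ-invariant
  have hmap : p.map (φ : K →+* K) = p := by
    have hstep : ∀ i, (F i).map (φ : K →+* K) = F (i + 1) := by
      intro i
      simp [hF, Function.iterate_succ_apply' φ i H]
    have h0 : F m = F 0 := by simp [hF, hHinv]
    have hne : F 0 ≠ 0 := Polynomial.X_sub_C_ne_zero _
    have : (∏ i ∈ Finset.range m, F (i + 1)) * F 0 = (∏ i ∈ Finset.range m, F i) * F 0 := by
      rw [← Finset.prod_range_succ' F m, Finset.prod_range_succ, h0]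
    have hprod : (∏ i ∈ Finset.range m, F (i + 1)) = ∏ i ∈ Finset.range m, F i :=
      mul_right_cancel₀ hne this
    rw [hp, Polynomial.map_prod]
    simp_rw [hstep]
    exact hprod
  -- all coefficients are φ-invariant, hence constant
  have hcoeff : ∀ n, p.coeff n ∈ Set.range (algebraMap k K) := by
    intro n
    by_contra hc
    have := hcon _ hc
    have h2 : φ (p.coeff n) = p.coeff n := by
      conv_rhs => rw [← hmap]
      rw [Polynomial.coeff_map]
      rfl
    exact this h2
  -- lift p to k[X]
  obtain ⟨q, hq'⟩ := (Polynomial.lifts_iff_coeff_lifts p).2 hcoeff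
  have hq : q.map (algebraMap k K) = p := hq'
  have hp0 : p ≠ 0 := hmonic.ne_zero
  have hq0 : q ≠ 0 := by
    rintro rfl
    rw [Polynomial.map_zero] at hq
    exact hp0 hq.symm
  -- H is algebraic over k
  have halg : IsAlgebraic k H := by
    refine ⟨q, hq0, ?_⟩
    rw [Polynomial.aeval_def, ← Polynomial.eval_map, hq]
    exact hroot
  have hint : IsIntegral k H := halg.isIntegral
  have hdeg : (minpoly k H).degree = 1 :=
    IsAlgClosed.degree_eq_one_of_irreducible k (minpoly.irreducible hint)
  have : H ∈ (algebraMap k K).range := (minpoly.degree_eq_one_iff).1 hdeg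
  exact hH this
end

section
/- Let π: X' ⇢ X be a generically finite dominant rational map between irreducible varieties over an algebraically closed field k of characteristic 0, and f: X ⇢ X, f': X' ⇢ X' dominant rational self-maps with f ∘ π = π ∘ f'. Then there exists a nonconstant f'-invariant rational function on X' if and only if there exists a nonconstant f-invariant rational function on X. -/
/-!
STATEMENT 1.
Let `π : X' ⇢ X` be a generically finite dominant rational map between irreducible varieties
over an algebraically closed field `k` of characteristic 0, and `f : X ⇢ X`, `f' : X' ⇢ X'`
dominant rational self-maps with `f ∘ π = π ∘ f'`.

We model everything by function fields: `K = k(X)` and `L = k(X')` are finitely generated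
field extensions of `k`; `π^*` is the inclusion `algebraMap K L`, and generic finiteness means
`[L : K] < ∞`, i.e. `FiniteDimensional K L`.  The self-maps are modelled by their pullbacks
`σ = f^* : K →ₐ[k] K` and `τ = f'^* : L →ₐ[k] L`; the relation `f ∘ π = π ∘ f'` becomes
`τ ∘ π^* = π^* ∘ σ` on `K`.  A rational function is nonconstant iff it is not in the image
of `k`, and `f`-invariant iff it is fixed by the pullback.

Claim: there exists a nonconstant `f'`-invariant rational function on `X'` iff there exists a
nonconstant `f`-invariant rational function on `X`.
-/
theorem stmt1
    (k : Type*) [Field k] [IsAlgClosed k] [CharZero k]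
    (K L : Type*) [Field K] [Field L]
    [Algebra k K] [Algebra k L] [Algebra K L] [IsScalarTower k K L]
    (hKfg : (⊤ : IntermediateField k K).FG)          -- K = k(X) finitely generated over k
    (hLfg : (⊤ : IntermediateField k L).FG)          -- L = k(X') finitely generated over k
    [FiniteDimensional K L]                           -- π is generically finite
    (σ : K →ₐ[k] K) (τ : L →ₐ[k] L)                   -- σ = f^*, τ = f'^*
    (hcomm : ∀ x : K, τ (algebraMap K L x) = algebraMap K L (σ x)) :  -- f ∘ π = π ∘ f'
    (∃ H' : L, H' ∉ Set.range (algebraMap k L) ∧ τ H' = H') ↔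
      (∃ H : K, H ∉ Set.range (algebraMap k K) ∧ σ H = H) := by
  constructor
  · rintro ⟨H', hH', hτ⟩
    have hint : IsIntegral K H' := IsIntegral.of_finite K H'
    set m := minpoly K H' with hm
    have hmon : m.Monic := minpoly.monic hint
    have hring : (τ : L →+* L).comp (algebraMap K L) = (algebraMap K L).comp (σ : K →+* K) :=
      RingHom.ext hcomm
    have haev : Polynomial.aeval H' (m.map (σ : K →+* K)) = 0 := by
      have h0 : Polynomial.eval₂ (algebraMap K L) H' m = 0 := minpoly.aeval K H'
      have h1 := Polynomial.hom_eval₂ m (algebraMap K L) (τ : L →+* L) H'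
      rw [h0, map_zero] at h1
      rw [Polynomial.aeval_def, Polynomial.eval₂_map, ← hring]
      rw [show (τ : L →+* L) H' = H' from hτ] at h1
      exact h1.symm
    have hdvd : m ∣ m.map (σ : K →+* K) := minpoly.dvd K H' haev
    have hmap_mon : (m.map (σ : K →+* K)).Monic := hmon.map _
    have heq : m.map (σ : K →+* K) = m :=
      Polynomial.eq_of_monic_of_dvd_of_natDegree_le hmon hmap_mon hdvd
        (le_of_eq (m.natDegree_map _))
    have hcoef : ∀ n, σ (m.coeff n) = m.coeff n := by
      intro n
      conv_rhs => rw [← heq]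
      rw [Polynomial.coeff_map]
      rfl
    by_contra hc
    push_neg at hc
    apply hH'
    have hall : ∀ n, m.coeff n ∈ (algebraMap k K).range := by
      intro n
      by_contra hmem
      exact hc (m.coeff n) (fun h => hmem (RingHom.mem_range.mpr h)) (hcoef n)
    obtain ⟨p, hp⟩ := (Polynomial.mem_map_range (algebraMap k K)).mpr hall
    have hp' : p.map (algebraMap k K) = m := hp
    have hpmon : p.Monic :=
      Polynomial.monic_of_injective (algebraMap k K).injective (hp' ▸ hmon)
    have hintk : IsIntegral k H' := by
      refine ⟨p, hpmon, ?_⟩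
      have : Polynomial.aeval H' (p.map (algebraMap k K)) = Polynomial.aeval H' p :=
        Polynomial.aeval_map_algebraMap K H' p
      rw [hp'] at this
      have h0 : Polynomial.aeval H' m = 0 := minpoly.aeval K H'
      rw [h0] at this
      exact this.symm
    -- k algebraically closed: H' is in the range of algebraMap k L
    refine ⟨-(minpoly k H').coeff 0, ?_⟩
    have hq : (minpoly k H').leadingCoeff = 1 := minpoly.monic hintk
    have hdeg1 : (minpoly k H').degree = 1 :=
      IsAlgClosed.degree_eq_one_of_irreducible k (minpoly.irreducible hintk)
    have h0 : Polynomial.aeval H' (minpoly k H') = 0 := minpoly.aeval k H'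
    rw [Polynomial.eq_X_add_C_of_degree_eq_one hdeg1, hq, Polynomial.C_1, one_mul,
      map_add, Polynomial.aeval_X, Polynomial.aeval_C, add_eq_zero_iff_eq_neg] at h0
    rw [map_neg]
    exact h0.symm
  · rintro ⟨H, hH, hσ⟩
    refine ⟨algebraMap K L H, ?_, by rw [hcomm, hσ]⟩
    rintro ⟨c, hcy⟩
    apply hH
    refine ⟨c, ?_⟩
    apply (algebraMap K L).injective
    rw [← hcy, ← IsScalarTower.algebraMap_apply]
end

section
/- Let X be a projective variety with a finite surjective endomorphism f over an algebraically closed field of characteristic 0, defined over a subfield K. Let p_0, ..., p_n be points of X(k̄) with f(p_i) = p_{i-1} for i = 1, ..., n, where d is the topological degree of f. Then the degree of the Galois extension K^{{p_0,...,p_n}}/K^{{p_0}} divides (d!)^n, where K^S denotes the smallest field extension of K over which all points of S are defined. -/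
open scoped Pointwise

lemma stmt7_key {G : Type*} [Group G] {P : Type*} [MulAction G P]
    (f : P → P) (hequiv : ∀ (g : G) (x : P), f (g • x) = g • f x) (d : ℕ)
    (hfin : ∀ x : P, {y : P | f y = x}.Finite)
    (hfib : ∀ x : P, Nat.card {y : P // f y = x} ≤ d)
    (H : Subgroup G) (x q : P) (hx : H ≤ MulAction.stabilizer G x) (hq : f q = x) :
    (MulAction.stabilizer G q).relIndex H ∣ d.factorial := by
  have hstab : MulAction.stabilizer H q = (MulAction.stabilizer G q).subgroupOf H := by
    ext h
    simp [MulAction.mem_stabilizer_iff, Subgroup.mem_subgroupOf, Subgroup.smul_def]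
  have horb : MulAction.orbit H q ⊆ {y : P | f y = x} := by
    rintro y ⟨h, rfl⟩
    show f ((h : G) • q) = x
    rw [hequiv, hq, hx h.2]
  have hofin : (MulAction.orbit H q).Finite := (hfin x).subset horb
  have hcard : (MulAction.orbit H q).ncard ≤ d := by
    rw [← Nat.card_coe_set_eq]
    calc Nat.card (MulAction.orbit H q) ≤ Nat.card {y : P | f y = x} :=
          Nat.card_mono (hfin x) horb
      _ ≤ d := hfib x
  have hpos : 0 < (MulAction.orbit H q).ncard := by
    rw [Set.ncard_pos hofin]
    exact ⟨q, MulAction.mem_orbit_self q⟩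
  have : (MulAction.stabilizer G q).relIndex H = (MulAction.orbit H q).ncard := by
    rw [Subgroup.relIndex, ← hstab, MulAction.index_stabilizer]
  rw [this]
  exact Nat.dvd_factorial hpos hcard

/-!
STATEMENT 7.
`X` is a projective variety with a finite surjective endomorphism `f` over an algebraically
closed field `k` of characteristic 0, both defined over a subfield `K` with `k = K̄`.
We work with the set `P = X(k)` of `k`-points, on which the Galois group `G = Gal(k/K)`
(`= k ≃ₐ[K] k`) acts; since `f` is defined over `K`, the induced map `f : P → P` is
`G`-equivariant, and since `f` has topological degree `d`, every fiber `f⁻¹(x)` is finite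
with at most `d` points.

For a finite set `S` of points, the field `K^S` (the smallest extension of `K` over which all
points of `S` are defined) corresponds under the Galois correspondence to the pointwise
stabilizer `G^S ≤ G`, and `[K^S : K^{S'}] = [G^{S'} : G^S]` for `S' ⊆ S`; so the claimed
divisibility of field degrees is stated as a divisibility of indices of stabilizer subgroups.

Claim: if `f(p_i) = p_{i-1}` for `i = 1, …, n`, then
`[K^{{p_0,…,p_n}} : K^{{p_0}}]` divides `(d!)^n`.
-/
theorem stmt7
    (K k : Type*) [Field K] [Field k] [CharZero K] [Algebra K k] [IsAlgClosure K k]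
    (P : Type*) [MulAction (k ≃ₐ[K] k) P]              -- P = X(k) with its Galois action
    (f : P → P)
    (hequiv : ∀ (g : k ≃ₐ[K] k) (x : P), f (g • x) = g • f x)  -- f is defined over K
    (d : ℕ)
    (hfin : ∀ x : P, {y : P | f y = x}.Finite)          -- f is finite
    (hfib : ∀ x : P, Nat.card {y : P // f y = x} ≤ d)   -- topological degree d
    (n : ℕ) (p : ℕ → P) (hchain : ∀ i < n, f (p (i + 1)) = p i) :
    Subgroup.relIndex
        (⨅ i ∈ Finset.range (n + 1), MulAction.stabilizer (k ≃ₐ[K] k) (p i))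
        (MulAction.stabilizer (k ≃ₐ[K] k) (p 0))
      ∣ (Nat.factorial d) ^ n := by
  set G := k ≃ₐ[K] k
  set S : ℕ → Subgroup G := fun m => ⨅ i ∈ Finset.range (m + 1), MulAction.stabilizer G (p i)
    with hS
  have hSle : ∀ m, ∀ i ∈ Finset.range (m + 1), S m ≤ MulAction.stabilizer G (p i) := by
    intro m i hi
    exact iInf_le_of_le i (iInf_le _ hi)
  induction n with
  | zero =>
    show Subgroup.relIndex (S 0) (MulAction.stabilizer G (p 0)) ∣ d.factorial ^ 0
    have : S 0 = MulAction.stabilizer G (p 0) := by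
      simp [hS]
    rw [this, pow_zero, Subgroup.relIndex_self]
  | succ n ih =>
    show Subgroup.relIndex (S (n + 1)) (MulAction.stabilizer G (p 0)) ∣ d.factorial ^ (n + 1)
    have hSsucc : S (n + 1) = MulAction.stabilizer G (p (n + 1)) ⊓ S n := by
      rw [hS]
      simp only [Finset.range_add_one (n := n + 1)]
      rw [Finset.iInf_insert]
    have h1 : S (n + 1) ≤ S n := by rw [hSsucc]; exact inf_le_right
    have h2 : S n ≤ MulAction.stabilizer G (p 0) :=
      hSle n 0 (Finset.mem_range.mpr (Nat.succ_pos n))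
    have hmul := Subgroup.relIndex_mul_relIndex (S (n + 1)) (S n)
      (MulAction.stabilizer G (p 0)) h1 h2
    rw [← hmul, pow_succ, mul_comm ((d.factorial) ^ n) d.factorial]
    refine mul_dvd_mul ?_ (ih (fun i hi => hchain i (Nat.lt_succ_of_lt hi)))
    rw [hSsucc, Subgroup.inf_relIndex_right]
    exact stmt7_key f hequiv d hfin hfib (S n) (p n) (p (n + 1))
      (hSle n n (Finset.mem_range.mpr (Nat.lt_succ_self n)))
      (hchain n (Nat.lt_succ_self n))
end

section
/- Let π: X → B be a ℙ¹-bundle over a smooth projective curve with Néron–Severi group N¹(X) of dimension 2, and f: X → X a finite endomorphism preserving π, covering f_B: B → B of degree d_B, with deg(f on fibers) = d_F, so d_f = d_F · d_B. Let F ∈ N¹(X) be the fiber class (so f*F = d_B F) and E a class spanning the other boundary ray of the nef cone with f*E = c·E. Then c = d_F. Moreover, if d_B ≠ d_F then E·E = 0. -/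
/-!
STATEMENT 18.
Let `π : X → B` be a `ℙ¹`-bundle over a smooth projective curve, with `N¹(X)` of dimension 2
(modelled by a real vector space `V` with `finrank V = 2` carrying the symmetric intersection
form `Q`), and `f : X → X` a finite endomorphism preserving `π`, covering `f_B : B → B` of
degree `d_B`, of degree `d_F` on the fibers, so `d_f = d_F·d_B`.  The pullback `T^* = f^*`
and pushforward `T_* = f_*` are adjoint for `Q` and satisfy `f_* f^* = d_f·id`.  Let
`F ∈ N¹(X)` be the fiber class, so `f^*F = d_B·F`, and `E` a class spanning the other
boundary ray of the nef cone, with `f^*E = c·E`; by the Hodge index theorem `E·F > 0`.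

Claim: `c = d_F`; moreover, if `d_B ≠ d_F` then `E·E = 0`.
-/
theorem stmt18
    (V : Type*) [AddCommGroup V] [Module ℝ V]
    (h2 : Module.finrank ℝ V = 2)                              -- N¹(X) has dimension 2
    (Q : V →ₗ[ℝ] V →ₗ[ℝ] ℝ) (hsymm : ∀ x y, Q x y = Q y x)     -- intersection pairing
    (Tstar Tpush : V →ₗ[ℝ] V)                                  -- f^* and f_*
    (hadj : ∀ x y, Q (Tstar x) y = Q x (Tpush y))              -- adjointness
    (dB dF : ℕ) (hdB : 1 ≤ dB) (hdF : 1 ≤ dF)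
    (hcomp : Tpush ∘ₗ Tstar = ((dF * dB : ℕ) : ℝ) • LinearMap.id)  -- f_* f^* = d_f · id
    (F E : V) (hFne : F ≠ 0) (hEne : E ≠ 0)
    (hF : Tstar F = (dB : ℝ) • F)                              -- F is the fiber class
    (c : ℝ) (hE : Tstar E = c • E)                             -- E spans the other nef ray
    (hHodge : 0 < Q E F) :                                     -- Hodge index: E·F > 0
    c = (dF : ℝ) ∧ (dB ≠ dF → Q E E = 0) := by
  have hTT : ∀ x : V, Tpush (Tstar x) = ((dF * dB : ℕ) : ℝ) • x := by
    intro x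
    have := congrArg (fun g => g x) hcomp
    simpa using this
  have key : ∀ x y : V, Q (Tstar x) (Tstar y) = ((dF * dB : ℕ) : ℝ) * Q x y := by
    intro x y
    rw [hadj, hTT]
    simp
  have h1 : c * (dB : ℝ) * Q E F = ((dF * dB : ℕ) : ℝ) * Q E F := by
    have := key E F
    rw [hE, hF] at this
    simpa [mul_assoc, mul_comm, mul_left_comm] using this
  have hc : c = (dF : ℝ) := by
    have hdB' : (0:ℝ) < (dB : ℝ) := by exact_mod_cast hdB
    have : c * (dB : ℝ) = (dF : ℝ) * (dB : ℝ) := by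
      have := mul_right_cancel₀ (ne_of_gt hHodge) h1
      push_cast at this ⊢
      linarith
    exact mul_right_cancel₀ (ne_of_gt hdB') this
  refine ⟨hc, fun hne => ?_⟩
  have h2' : c * c * Q E E = ((dF * dB : ℕ) : ℝ) * Q E E := by
    have := key E E
    rw [hE] at this
    simpa [mul_assoc, mul_comm, mul_left_comm] using this
  subst hc
  by_contra hQ
  have : (dF : ℝ) * (dF : ℝ) = ((dF * dB : ℕ) : ℝ) := mul_right_cancel₀ hQ h2'
  push_cast at this
  have hdF' : (0:ℝ) < (dF : ℝ) := by exact_mod_cast hdF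
  have heq : (dF : ℝ) = (dB : ℝ) := mul_left_cancel₀ (ne_of_gt hdF') this
  exact hne (by exact_mod_cast heq.symm)
end
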